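/- Let α > 0 and set γ_α = 6 H_α″(-c_α)/H_α‴(-c_α). Then γ_α > 0, v_α(x)/( γ_α^{1/2} (x + c_α)^{1/2} ) → 1 as x ↓ -c_α, and lim_{x ↓ -c_α} (P_α(x) − s_α)/(x + c_α) = −(1/2) γ_α H_α″(-c_α) > 0. -/

import Mathlib

open MeasureTheory Set Filter

/-- `F(x+iy) = ∫₀^∞ t e^{-t}/((x-t)² + y²) dt`. -/
noncomputable def Fint (x y : ℝ) : ℝ :=
  ∫ t in Set.Ioi (0:ℝ), t * Real.exp (-t) / ((x - t)^2 + y^2)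

/-- `H_α(z) = z + α + α ∫₀^∞ t e^{-t}/(z-t) dt`. -/
noncomputable def Hfun (α : ℝ) (z : ℂ) : ℂ :=
  z + (α : ℂ) + (α : ℂ) * ∫ t in Set.Ioi (0:ℝ), ((t * Real.exp (-t) : ℝ) : ℂ) / (z - (t : ℂ))


/-!
Write `Iₙ = ∫₀^∞ t e^{-t} (c + t)^{-n} dt`, so that `c` is defined by `α I₂ = 1`.
Differentiating under the integral sign gives `H″(-c) = -2α I₃` and `H‴(-c) = -6α I₄`,
hence `γ = 2 I₃ / I₄ > 0`.

For `x > -c` and `y = v(x)`, subtracting `F(x + iy) = 1/α = I₂` gives the exact identity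
`(y² + (x + c)²) M₂ = 2 (x + c) M₁`, where `Mₖ = ∫ t e^{-t} / (((x - t)² + y²)(c + t)ᵏ) dt`.
Since `v(x) → 0` (by monotonicity of `F` in `y`), dominated convergence gives `Mₖ → I_{k+2}`,
so `v(x)² / (x + c) → 2 I₃ / I₄ = γ`.

Finally, `α I₂ = 1` turns `H(w) - H(-c)` into `α (w + c)² ∫ t e^{-t} / ((c + t)² (w - t)) dt`.
With `w = x + i v(x)`, `(w + c)² / (x + c) = (x + c) - v² / (x + c) + 2iv → -γ` and the
integral tends to `-I₃`, so `(P(x) - s) / (x + c) → α γ I₃ = -γ H″(-c) / 2`.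
-/

open Topology

lemma setIntegral_pos_of_forall_pos {X : Type*} [MeasurableSpace X] {μ : Measure X} {s : Set X}
    {f : X → ℝ} (hs : MeasurableSet s) (hμ : 0 < μ s) (hf : IntegrableOn f s μ)
    (hpos : ∀ x ∈ s, 0 < f x) : 0 < ∫ x in s, f x ∂μ := by
  rw [setIntegral_pos_iff_support_of_nonneg_ae
    (ae_restrict_of_forall_mem hs fun x hx => (hpos x hx).le) hf]
  exact hμ.trans_le (measure_mono fun x hx => ⟨(hpos x hx).ne', hx⟩)

lemma MeasureTheory.IntegrableOn.div_of_le {f g : ℝ → ℝ} {s : Set ℝ} {C : ℝ}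
    (hf : IntegrableOn f s) (hs : MeasurableSet s) (hC : 0 < C) (hg : Measurable g)
    (hle : ∀ t ∈ s, C ≤ g t) :
    IntegrableOn (fun t => f t / g t) s := by
  simp_rw [div_eq_mul_inv]
  refine hf.mul_bdd (c := C⁻¹) hg.inv.aestronglyMeasurable
    (ae_restrict_of_forall_mem hs fun t ht => ?_)
  have hgt := hle t ht
  rw [norm_inv, Real.norm_of_nonneg (hC.le.trans hgt)]
  exact inv_anti₀ hC hgt

lemma integrableOn_div_add_pow {f : ℝ → ℝ} {c : ℝ} (hf : IntegrableOn f (Ioi 0)) (hc : 0 < c)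
    (n : ℕ) : IntegrableOn (fun t => f t / (c + t) ^ n) (Ioi 0) :=
  hf.div_of_le measurableSet_Ioi (pow_pos hc n) (by fun_prop) fun t (ht : 0 < t) =>
    pow_le_pow_left₀ hc.le (by linarith) n

lemma integrableOn_mul_exp_neg_Ioi : IntegrableOn (fun t : ℝ => t * Real.exp (-t)) (Ioi 0) := by
  have h := Real.GammaIntegral_convergent (s := 2) two_pos
  norm_num at h
  simpa only [mul_comm] using h

lemma integrableOn_mul_exp_neg_div {g : ℝ → ℝ} {C : ℝ} (hC : 0 < C) (hg : Measurable g)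
    (hle : ∀ t > 0, C ≤ g t) : IntegrableOn (fun t => t * Real.exp (-t) / g t) (Ioi 0) :=
  integrableOn_mul_exp_neg_Ioi.div_of_le measurableSet_Ioi hC hg hle

lemma integral_mul_exp_neg_div_pos {g : ℝ → ℝ} {C : ℝ} (hC : 0 < C) (hg : Measurable g)
    (hle : ∀ t > 0, C ≤ g t) : 0 < ∫ t in Ioi 0, t * Real.exp (-t) / g t :=
  setIntegral_pos_of_forall_pos measurableSet_Ioi (by simp)
    (integrableOn_mul_exp_neg_div hC hg hle) fun t (ht : 0 < t) =>
      div_pos (by positivity) (hC.trans_le (hle t ht))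

lemma tendsto_div_sqrt_mul_sqrt {ι : Type*} {l : Filter ι} {a b : ι → ℝ} {γ : ℝ} (hγ : 0 < γ)
    (ha : ∀ᶠ i in l, 0 < a i) (hb : ∀ᶠ i in l, 0 < b i)
    (h : Tendsto (fun i => b i ^ 2 / a i) l (𝓝 γ)) :
    Tendsto (fun i => b i / (Real.sqrt γ * Real.sqrt (a i))) l (𝓝 1) := by
  have h1 : Tendsto (fun i => Real.sqrt (b i ^ 2 / a i / γ)) l (𝓝 1) := by
    simpa [hγ.ne'] using (h.div_const γ).sqrt
  refine h1.congr' ?_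
  filter_upwards [ha, hb] with i hai hbi
  rw [Real.sqrt_div (by positivity), Real.sqrt_div (by positivity), Real.sqrt_sq hbi.le,
    div_div, mul_comm]

lemma tendsto_sq_add_mul_I_div {ι : Type*} {l : Filter ι} {a b : ι → ℝ} {γ : ℝ}
    (ha : Tendsto a l (𝓝 0)) (hb : Tendsto b l (𝓝 0)) (ha0 : ∀ᶠ i in l, a i ≠ 0)
    (h : Tendsto (fun i => b i ^ 2 / a i) l (𝓝 γ)) :
    Tendsto (fun i => ((a i : ℂ) + b i * Complex.I) ^ 2 / a i) l (𝓝 (-γ)) := by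
  have hlim : Tendsto (fun i => ((a i - b i ^ 2 / a i : ℝ) : ℂ) + 2 * (b i : ℂ) * Complex.I) l
      (𝓝 (((0 - γ : ℝ) : ℂ) + 2 * ((0 : ℝ) : ℂ) * Complex.I)) :=
    (Complex.continuous_ofReal.continuousAt.tendsto.comp (ha.sub h)).add
      (((Complex.continuous_ofReal.continuousAt.tendsto.comp hb).const_mul 2).mul_const _)
  rw [zero_sub, Complex.ofReal_zero, mul_zero, zero_mul, add_zero, Complex.ofReal_neg] at hlim
  refine hlim.congr' ?_
  filter_upwards [ha0] with i hi
  have : (a i : ℂ) ≠ 0 := by exact_mod_cast hi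
  push_cast
  field_simp
  linear_combination (-(b i : ℂ) ^ 2) * Complex.I_sq

noncomputable def texpMoment (c : ℝ) (n : ℕ) : ℝ :=
  ∫ t in Ioi (0:ℝ), t * Real.exp (-t) / (c + t) ^ n

noncomputable def Fmoment (c : ℝ) (n : ℕ) (x y : ℝ) : ℝ :=
  ∫ t in Ioi (0:ℝ), t * Real.exp (-t) / (((x - t) ^ 2 + y ^ 2) * (c + t) ^ n)

section Moments

variable {c : ℝ}

lemma texpMoment_pos (hc : 0 < c) (n : ℕ) : 0 < texpMoment c n :=
  integral_mul_exp_neg_div_pos (pow_pos hc n) (by fun_prop) fun t ht =>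
    pow_le_pow_left₀ hc.le (by linarith) n

lemma sq_mul_pow_le (hc : 0 < c) (n : ℕ) (x y : ℝ) {t : ℝ} (ht : 0 < t) :
    y ^ 2 * c ^ n ≤ ((x - t) ^ 2 + y ^ 2) * (c + t) ^ n := by
  gcongr
  · nlinarith [sq_nonneg (x - t)]
  · linarith

lemma integrableOn_Fmoment (hc : 0 < c) (n : ℕ) (x : ℝ) {y : ℝ} (hy : y ≠ 0) :
    IntegrableOn (fun t => t * Real.exp (-t) / (((x - t) ^ 2 + y ^ 2) * (c + t) ^ n)) (Ioi 0) :=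
  integrableOn_mul_exp_neg_div (by positivity) (by fun_prop) fun _ ht => sq_mul_pow_le hc n x y ht

lemma Fmoment_pos (hc : 0 < c) (n : ℕ) (x : ℝ) {y : ℝ} (hy : y ≠ 0) : 0 < Fmoment c n x y :=
  integral_mul_exp_neg_div_pos (by positivity) (by fun_prop) fun _ ht => sq_mul_pow_le hc n x y ht

lemma Fint_eq_Fmoment_zero (c x y : ℝ) : Fint x y = Fmoment c 0 x y := by
  simp [Fint, Fmoment]

lemma Fmoment_neg_zero (c : ℝ) (n : ℕ) : Fmoment c n (-c) 0 = texpMoment c (n + 2) := by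
  unfold Fmoment texpMoment
  congr with t
  ring_nf

lemma texpMoment_two_sub_Fint (hc : 0 < c) (x : ℝ) {y : ℝ} (hy : y ≠ 0) :
    texpMoment c 2 - Fint x y
      = (y ^ 2 + (x + c) ^ 2) * Fmoment c 2 x y - 2 * (x + c) * Fmoment c 1 x y := by
  have hF : IntegrableOn (fun t => t * Real.exp (-t) / ((x - t) ^ 2 + y ^ 2)) (Ioi 0) := by
    simpa using integrableOn_Fmoment hc 0 x hy
  unfold texpMoment Fint Fmoment
  rw [← integral_sub (integrableOn_div_add_pow integrableOn_mul_exp_neg_Ioi hc 2) hF,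
    ← integral_const_mul, ← integral_const_mul,
    ← integral_sub ((integrableOn_Fmoment hc 2 x hy).const_mul _)
      ((integrableOn_Fmoment hc 1 x hy).const_mul _)]
  refine setIntegral_congr_fun measurableSet_Ioi fun t (ht : 0 < t) => ?_
  have hct : 0 < c + t := by linarith
  have hD : 0 < (x - t) ^ 2 + y ^ 2 := by positivity
  field_simp
  ring

lemma continuousAt_Fmoment (hc : 0 < c) (n : ℕ) {x₀ : ℝ} (hx₀ : x₀ < 0) (y₀ : ℝ) :
    ContinuousAt (fun p : ℝ × ℝ => Fmoment c n p.1 p.2) (x₀, y₀) := by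
  have hnear : ∀ᶠ p : ℝ × ℝ in 𝓝 (x₀, y₀), p.1 < x₀ / 2 :=
    continuous_fst.continuousAt.eventually (gt_mem_nhds (by linarith))
  refine tendsto_integral_filter_of_dominated_convergence
    (fun t => t * Real.exp (-t) / ((x₀ / 2) ^ 2 * c ^ n)) ?_ ?_
    (integrableOn_mul_exp_neg_Ioi.div_const _) ?_
  · exact Eventually.of_forall fun p => (by fun_prop : Measurable _).aestronglyMeasurable
  · filter_upwards [hnear] with p hp
    refine ae_restrict_of_forall_mem measurableSet_Ioi fun t (ht : 0 < t) => ?_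
    have hx : (x₀ / 2) ^ 2 ≤ (p.1 - t) ^ 2 + p.2 ^ 2 := by nlinarith [sq_nonneg p.2]
    have hx₀' : x₀ / 2 ≠ 0 := by linarith
    rw [Real.norm_of_nonneg (by positivity)]
    exact div_le_div_of_nonneg_left (by positivity) (by positivity)
      (mul_le_mul hx (pow_le_pow_left₀ hc.le (by linarith) n) (by positivity) (by positivity))
  · refine ae_restrict_of_forall_mem measurableSet_Ioi fun t (ht : 0 < t) => ?_
    have hD : (x₀ - t) ^ 2 + y₀ ^ 2 ≠ 0 := by nlinarith [sq_nonneg y₀]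
    have hden : Continuous fun p : ℝ × ℝ => ((p.1 - t) ^ 2 + p.2 ^ 2) * (c + t) ^ n := by
      fun_prop
    exact (continuousAt_const.div hden.continuousAt
      (mul_ne_zero hD (by positivity))).tendsto

lemma Fint_antitoneOn (x : ℝ) : AntitoneOn (Fint x) (Ioi 0) := by
  have hint (y : ℝ) (hy : 0 < y) :
      IntegrableOn (fun t => t * Real.exp (-t) / ((x - t) ^ 2 + y ^ 2)) (Ioi 0) :=
    integrableOn_mul_exp_neg_div (pow_pos hy 2) (by fun_prop) fun t _ => by
      nlinarith [sq_nonneg (x - t)]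
  intro a (ha : 0 < a) b (hb : 0 < b) hab
  refine setIntegral_mono_on (hint b hb) (hint a ha) measurableSet_Ioi fun t (ht : 0 < t) => ?_
  gcongr

lemma Fint_neg_lt_texpMoment_two (hc : 0 < c) {b : ℝ} (hb : 0 < b) :
    Fint (-c) b < texpMoment c 2 := by
  have h := texpMoment_two_sub_Fint hc (-c) hb.ne'
  rw [neg_add_cancel] at h
  nlinarith [mul_pos (pow_pos hb 2) (Fmoment_pos hc 2 (-c) hb.ne')]

end Moments

noncomputable def cauchyPow (f : ℝ → ℝ) (n : ℕ) (z : ℂ) : ℂ :=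
  ∫ t in Ioi (0:ℝ), (f t : ℂ) * (z - t) ^ (-(n : ℤ))

lemma exists_pos_le_norm_sub_ofReal {z : ℂ} (hz : z.re < 0 ∨ z.im ≠ 0) :
    ∃ δ > 0, ∀ t : ℝ, 0 ≤ t → δ ≤ ‖z - t‖ := by
  rcases hz with hre | him
  · refine ⟨-z.re, neg_pos.2 hre, fun t ht => ?_⟩
    calc -z.re ≤ |(z - t).re| := by
          rw [Complex.sub_re, Complex.ofReal_re, abs_sub_comm]
          exact (by linarith : -z.re ≤ t - z.re).trans (le_abs_self _)
      _ ≤ ‖z - t‖ := Complex.abs_re_le_norm _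
  · exact ⟨|z.im|, abs_pos.2 him, fun t _ => by simpa using Complex.abs_im_le_norm (z - t)⟩

lemma norm_zpow_neg_le {w : ℂ} {δ : ℝ} (hδ : 0 < δ) (h : δ ≤ ‖w‖) (n : ℕ) :
    ‖w ^ (-(n : ℤ))‖ ≤ (δ ^ n)⁻¹ := by
  rw [norm_zpow, zpow_neg, zpow_natCast]
  exact inv_anti₀ (pow_pos hδ n) (pow_le_pow_left₀ hδ.le h n)

lemma re_neg_or_im_ne_ofReal_neg {c : ℝ} (hc : 0 < c) :
    ((-c : ℝ) : ℂ).re < 0 ∨ ((-c : ℝ) : ℂ).im ≠ 0 :=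
  Or.inl (by simpa using hc)

section CauchyPow

variable {f : ℝ → ℝ} {c : ℝ}

lemma integrableOn_cauchyPow (hf : IntegrableOn f (Ioi 0)) (n : ℕ) {z : ℂ} {δ : ℝ} (hδ : 0 < δ)
    (hz : ∀ t : ℝ, 0 ≤ t → δ ≤ ‖z - t‖) :
    IntegrableOn (fun t : ℝ => (f t : ℂ) * (z - t) ^ (-(n : ℤ))) (Ioi 0) :=
  hf.ofReal.mul_bdd (c := (δ ^ n)⁻¹)
    ((measurable_const.sub Complex.measurable_ofReal).pow_const _).aestronglyMeasurable
    (ae_restrict_of_forall_mem measurableSet_Ioi fun t (ht : 0 < t) =>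
      norm_zpow_neg_le hδ (hz t ht.le) n)

lemma hasDerivAt_cauchyPow (hf : IntegrableOn f (Ioi 0)) (n : ℕ) {z₀ : ℂ}
    (hz₀ : z₀.re < 0 ∨ z₀.im ≠ 0) :
    HasDerivAt (cauchyPow f n) (-n * cauchyPow f (n + 1) z₀) z₀ := by
  obtain ⟨δ, hδ, hle⟩ := exists_pos_le_norm_sub_ofReal hz₀
  have hball : ∀ z ∈ Metric.ball z₀ (δ / 2), ∀ t : ℝ, 0 ≤ t → δ / 2 ≤ ‖z - t‖ := by
    intro z hz t ht
    have h1 := norm_sub_le_norm_sub_add_norm_sub z₀ z t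
    have h2 : ‖z₀ - z‖ < δ / 2 := by rw [← dist_eq_norm, dist_comm]; exact hz
    linarith [hle t ht]
  have hmeas (z : ℂ) (k : ℕ) :
      AEStronglyMeasurable (fun t : ℝ => (f t : ℂ) * (z - t) ^ (-(k : ℤ)))
        (volume.restrict (Ioi 0)) :=
    hf.ofReal.aestronglyMeasurable.mul
      ((measurable_const.sub Complex.measurable_ofReal).pow_const _).aestronglyMeasurable
  have key := hasDerivAt_integral_of_dominated_loc_of_deriv_le (μ := volume.restrict (Ioi 0))
    (F := fun z t => (f t : ℂ) * (z - t) ^ (-(n : ℤ)))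
    (F' := fun z t => -(n : ℂ) * ((f t : ℂ) * (z - t) ^ (-((n + 1 : ℕ) : ℤ))))
    (bound := fun t => n * (‖f t‖ * ((δ / 2) ^ (n + 1))⁻¹))
    (Metric.ball_mem_nhds z₀ (half_pos hδ)) (Eventually.of_forall fun z => hmeas z n)
    (integrableOn_cauchyPow hf n hδ hle)
    ((hmeas z₀ (n + 1)).const_mul _) ?_ ((hf.norm.mul_const _).const_mul _) ?_
  · rw [integral_const_mul] at key
    exact key.2
  · refine ae_restrict_of_forall_mem measurableSet_Ioi fun t (ht : 0 < t) z hz => ?_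
    rw [norm_mul, norm_mul, norm_neg, Complex.norm_natCast, Complex.norm_real]
    gcongr
    exact norm_zpow_neg_le (half_pos hδ) (hball z hz t ht.le) (n + 1)
  · refine ae_restrict_of_forall_mem measurableSet_Ioi fun t (ht : 0 < t) z hz => ?_
    have hne : z - t ≠ 0 := norm_pos_iff.1 ((half_pos hδ).trans_le (hball z hz t ht.le))
    have h := ((hasDerivAt_zpow (-(n : ℤ)) (z - t) (Or.inl hne)).comp z
      ((hasDerivAt_id z).sub_const (t : ℂ))).const_mul (f t : ℂ)
    rw [show -(n : ℤ) - 1 = -((n + 1 : ℕ) : ℤ) by push_cast; ring] at h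
    exact h.congr_deriv (by push_cast; ring)

lemma cauchyPow_ofReal_neg (f : ℝ → ℝ) (hc : 0 < c) (n : ℕ) :
    cauchyPow f n ((-c : ℝ) : ℂ)
      = (-1) ^ n * ((∫ t in Ioi (0:ℝ), f t / (c + t) ^ n : ℝ) : ℂ) := by
  rw [← integral_complex_ofReal, cauchyPow, ← integral_const_mul]
  refine setIntegral_congr_fun measurableSet_Ioi fun t (ht : 0 < t) => ?_
  have hct : (c : ℂ) + t ≠ 0 := by exact_mod_cast (by linarith : 0 < c + t).ne'
  rw [zpow_neg, zpow_natCast, show ((-c : ℝ) : ℂ) - t = -1 * (c + t) by push_cast; ring, mul_pow]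
  push_cast
  field_simp
  rw [← pow_mul, mul_comm n, pow_mul, neg_one_sq, one_pow, mul_one]

lemma cauchyPow_one_sub_cauchyPow_one_ofReal_neg (hf : IntegrableOn f (Ioi 0)) (hc : 0 < c)
    {w : ℂ} (hw : w.re < 0 ∨ w.im ≠ 0) :
    cauchyPow f 1 w - cauchyPow f 1 ((-c : ℝ) : ℂ)
        + (w + c) * ((∫ t in Ioi (0:ℝ), f t / (c + t) ^ 2 : ℝ) : ℂ)
      = (w + c) ^ 2 * cauchyPow (fun t => f t / (c + t) ^ 2) 1 w := by
  obtain ⟨δ, hδ, hle⟩ := exists_pos_le_norm_sub_ofReal hw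
  obtain ⟨δ', hδ', hle'⟩ := exists_pos_le_norm_sub_ofReal (re_neg_or_im_ne_ofReal_neg hc)
  rw [← integral_complex_ofReal, cauchyPow, cauchyPow, cauchyPow,
    ← integral_sub (integrableOn_cauchyPow hf 1 hδ hle) (integrableOn_cauchyPow hf 1 hδ' hle'),
    ← integral_const_mul,
    ← integral_add _ (((integrableOn_div_add_pow hf hc 2).ofReal).const_mul _),
    ← integral_const_mul]
  · refine setIntegral_congr_fun measurableSet_Ioi fun t (ht : 0 < t) => ?_
    have hct : (c : ℂ) + t ≠ 0 := by exact_mod_cast (by linarith : 0 < c + t).ne'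
    have hwt : w - t ≠ 0 := norm_pos_iff.1 (hδ.trans_le (hle t ht.le))
    simp only [Nat.cast_one, zpow_neg_one]
    push_cast
    rw [show -(c : ℂ) - t = -(c + t) by ring]
    field_simp
    ring
  · exact (integrableOn_cauchyPow hf 1 hδ hle).sub (integrableOn_cauchyPow hf 1 hδ' hle')

end CauchyPow

section Hfun

variable {α c : ℝ}

lemma Hfun_eq_cauchyPow (α : ℝ) :
    Hfun α = fun z => z + α + α * cauchyPow (fun t => t * Real.exp (-t)) 1 z := by
  ext z
  simp [Hfun, cauchyPow, div_eq_mul_inv]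

lemma hasDerivAt_Hfun (α : ℝ) {z : ℂ} (hz : z.re < 0 ∨ z.im ≠ 0) :
    HasDerivAt (Hfun α) (1 - α * cauchyPow (fun t => t * Real.exp (-t)) 2 z) z := by
  rw [Hfun_eq_cauchyPow]
  exact (((hasDerivAt_id z).add_const _).add ((hasDerivAt_cauchyPow
    integrableOn_mul_exp_neg_Ioi 1 hz).const_mul _)).congr_deriv (by push_cast; ring)

lemma isOpen_re_neg_or_im_ne : IsOpen {z : ℂ | z.re < 0 ∨ z.im ≠ 0} :=
  (isOpen_lt Complex.continuous_re continuous_const).union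
    (isOpen_ne_fun Complex.continuous_im continuous_const)

lemma eqOn_iteratedDeriv_two_Hfun (α : ℝ) :
    EqOn (iteratedDeriv 2 (Hfun α)) (fun z => 2 * α * cauchyPow (fun t => t * Real.exp (-t)) 3 z)
      {z : ℂ | z.re < 0 ∨ z.im ≠ 0} := by
  intro z hz
  have h1 : EqOn (deriv (Hfun α)) (fun z => 1 - α * cauchyPow (fun t => t * Real.exp (-t)) 2 z)
      {z : ℂ | z.re < 0 ∨ z.im ≠ 0} := fun z hz => (hasDerivAt_Hfun α hz).deriv
  rw [iteratedDeriv_succ, iteratedDeriv_one, h1.deriv isOpen_re_neg_or_im_ne hz]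
  exact (((hasDerivAt_cauchyPow integrableOn_mul_exp_neg_Ioi 2 hz).const_mul _).const_sub
    _).deriv.trans (by push_cast; ring)

lemma iteratedDeriv_three_Hfun (α : ℝ) {z : ℂ} (hz : z.re < 0 ∨ z.im ≠ 0) :
    iteratedDeriv 3 (Hfun α) z = -6 * α * cauchyPow (fun t => t * Real.exp (-t)) 4 z := by
  rw [iteratedDeriv_succ, (eqOn_iteratedDeriv_two_Hfun α).deriv isOpen_re_neg_or_im_ne hz]
  exact ((hasDerivAt_cauchyPow integrableOn_mul_exp_neg_Ioi 3 hz).const_mul _).deriv.trans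
    (by push_cast; ring)

lemma iteratedDeriv_two_Hfun_ofReal_neg (α : ℝ) (hc : 0 < c) :
    iteratedDeriv 2 (Hfun α) ((-c : ℝ) : ℂ) = ((-2 * α * texpMoment c 3 : ℝ) : ℂ) := by
  rw [eqOn_iteratedDeriv_two_Hfun α (re_neg_or_im_ne_ofReal_neg hc)]
  dsimp only
  rw [cauchyPow_ofReal_neg _ hc, texpMoment]
  push_cast
  ring

lemma iteratedDeriv_three_Hfun_ofReal_neg (α : ℝ) (hc : 0 < c) :
    iteratedDeriv 3 (Hfun α) ((-c : ℝ) : ℂ) = ((-6 * α * texpMoment c 4 : ℝ) : ℂ) := by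
  rw [iteratedDeriv_three_Hfun α (re_neg_or_im_ne_ofReal_neg hc), cauchyPow_ofReal_neg _ hc,
    texpMoment]
  push_cast
  ring

lemma Hfun_sub_Hfun_ofReal_neg (hα : α ≠ 0) (hc : 0 < c) (hceq : texpMoment c 2 = 1 / α)
    {w : ℂ} (hw : w.re < 0 ∨ w.im ≠ 0) :
    Hfun α w - Hfun α ((-c : ℝ) : ℂ)
      = α * (w + c) ^ 2 * cauchyPow (fun t => t * Real.exp (-t) / (c + t) ^ 2) 1 w := by
  have h := cauchyPow_one_sub_cauchyPow_one_ofReal_neg integrableOn_mul_exp_neg_Ioi hc hw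
  rw [show (∫ t in Ioi (0:ℝ), t * Real.exp (-t) / (c + t) ^ 2) = texpMoment c 2 from rfl,
    hceq] at h
  have hα' : (α : ℂ) ≠ 0 := by exact_mod_cast hα
  rw [Hfun_eq_cauchyPow, mul_assoc, ← h]
  push_cast
  field_simp
  ring

end Hfun

section LeftEndpoint

variable {α c : ℝ} {v : ℝ → ℝ}

lemma tendsto_add_nhdsGT_neg (c : ℝ) : Tendsto (fun x => x + c) (𝓝[>] (-c)) (𝓝 0) :=
  ((continuous_add_const c).tendsto' (-c) 0 (neg_add_cancel c)).mono_left nhdsWithin_le_nhds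

lemma tendsto_zero_of_Fint_eq (hc : 0 < c) (hceq : texpMoment c 2 = 1 / α)
    (hvpos : ∀ x, -c < x → 0 < v x) (hveq : ∀ x, -c < x → Fint x (v x) = 1 / α) :
    Tendsto v (𝓝[>] (-c)) (𝓝 0) := by
  refine tendsto_order.2 ⟨fun a ha => ?_, fun b hb => ?_⟩
  · filter_upwards [self_mem_nhdsWithin] with x hx using ha.trans (hvpos x hx)
  · have hcont : Tendsto (fun x => Fint x b) (𝓝[>] (-c)) (𝓝 (Fint (-c) b)) := by
      simp only [Fint_eq_Fmoment_zero c]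
      exact ((continuousAt_Fmoment hc 0 (by linarith) b).tendsto.comp
        (Continuous.prodMk_left b).continuousAt.tendsto).mono_left nhdsWithin_le_nhds
    have hlt : Fint (-c) b < 1 / α := hceq ▸ Fint_neg_lt_texpMoment_two hc hb
    filter_upwards [hcont (Iio_mem_nhds hlt), self_mem_nhdsWithin] with x hx hxc
    by_contra! hvb
    have := Fint_antitoneOn x hb (hb.trans_le hvb) hvb
    rw [hveq x hxc] at this
    exact absurd hx (not_lt.2 this)

lemma tendsto_Fmoment_nhdsGT (hc : 0 < c) (n : ℕ) (hvt : Tendsto v (𝓝[>] (-c)) (𝓝 0)) :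
    Tendsto (fun x => Fmoment c n x (v x)) (𝓝[>] (-c)) (𝓝 (texpMoment c (n + 2))) := by
  have hpt : Tendsto (fun x => (x, v x)) (𝓝[>] (-c)) (𝓝 (-c, 0)) :=
    (tendsto_nhdsWithin_of_tendsto_nhds tendsto_id).prodMk_nhds hvt
  have h := (continuousAt_Fmoment hc n (x₀ := -c) (by linarith) 0).tendsto.comp hpt
  rwa [← Fmoment_neg_zero]

lemma tendsto_sq_div_nhdsGT (hc : 0 < c) (hceq : texpMoment c 2 = 1 / α)
    (hvpos : ∀ x, -c < x → 0 < v x) (hveq : ∀ x, -c < x → Fint x (v x) = 1 / α) :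
    Tendsto (fun x => v x ^ 2 / (x + c)) (𝓝[>] (-c))
      (𝓝 (2 * texpMoment c 3 / texpMoment c 4)) := by
  have hvt := tendsto_zero_of_Fint_eq hc hceq hvpos hveq
  have hlim := (((tendsto_Fmoment_nhdsGT hc 1 hvt).const_mul 2).div
    (tendsto_Fmoment_nhdsGT hc 2 hvt) (texpMoment_pos hc 4).ne').sub (tendsto_add_nhdsGT_neg c)
  rw [sub_zero] at hlim
  refine hlim.congr' ?_
  filter_upwards [self_mem_nhdsWithin] with x (hx : -c < x)
  have hv := hvpos x hx
  have hid := texpMoment_two_sub_Fint hc x hv.ne'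
  have hM := Fmoment_pos hc 2 x hv.ne'
  rw [hceq, hveq x hx, sub_self] at hid
  have : x + c ≠ 0 := by linarith
  simp only [Pi.div_apply]
  field_simp
  linear_combination hid

lemma tendsto_cauchyPow_div_sq_nhdsGT (hc : 0 < c) (hvt : Tendsto v (𝓝[>] (-c)) (𝓝 0)) :
    Tendsto (fun x : ℝ => cauchyPow (fun t => t * Real.exp (-t) / (c + t) ^ 2) 1
      (x + v x * Complex.I)) (𝓝[>] (-c)) (𝓝 (-(texpMoment c 3 : ℂ))) := by
  have hz : Tendsto (fun x : ℝ => (x : ℂ) + v x * Complex.I) (𝓝[>] (-c)) (𝓝 ((-c : ℝ) : ℂ)) := by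
    simpa using (Complex.continuous_ofReal.continuousAt.tendsto.comp
      (tendsto_nhdsWithin_of_tendsto_nhds (tendsto_id (x := 𝓝 (-c))))).add
      ((Complex.continuous_ofReal.continuousAt.tendsto.comp hvt).mul_const Complex.I)
  have hI : ∫ t in Ioi (0:ℝ), t * Real.exp (-t) / (c + t) ^ 2 / (c + t) ^ 1 = texpMoment c 3 := by
    unfold texpMoment
    congr 1 with t
    rw [div_div, ← pow_add]
  have h := (hasDerivAt_cauchyPow (integrableOn_div_add_pow integrableOn_mul_exp_neg_Ioi hc 2)
    1 (re_neg_or_im_ne_ofReal_neg hc)).continuousAt.tendsto.comp hz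
  rwa [cauchyPow_ofReal_neg _ hc, hI, pow_one, neg_one_mul] at h

lemma tendsto_sub_div_nhdsGT (hα : α ≠ 0) (hc : 0 < c) (hceq : texpMoment c 2 = 1 / α)
    (hvpos : ∀ x, -c < x → 0 < v x) (hvt : Tendsto v (𝓝[>] (-c)) (𝓝 0)) {γ : ℝ}
    (hrat : Tendsto (fun x => v x ^ 2 / (x + c)) (𝓝[>] (-c)) (𝓝 γ)) {P : ℝ → ℝ}
    (hP : ∀ x : ℝ, (P x : ℂ) = Hfun α (x + v x * Complex.I)) {s : ℝ}
    (hs : (s : ℂ) = Hfun α ((-c : ℝ) : ℂ)) :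
    Tendsto (fun x => (P x - s) / (x + c)) (𝓝[>] (-c)) (𝓝 (α * γ * texpMoment c 3)) := by
  have hq := tendsto_sq_add_mul_I_div (tendsto_add_nhdsGT_neg c) hvt
    (eventually_mem_nhdsWithin.mono fun x (hx : -c < x) => by linarith) hrat
  have hlim := (Complex.continuous_re.tendsto _).comp
    ((hq.const_mul (α : ℂ)).mul (tendsto_cauchyPow_div_sq_nhdsGT hc hvt))
  rw [show (α : ℂ) * -(γ : ℂ) * -(texpMoment c 3 : ℂ) = ((α * γ * texpMoment c 3 : ℝ) : ℂ) by
    push_cast; ring, Complex.ofReal_re] at hlim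
  refine hlim.congr' ?_
  filter_upwards [self_mem_nhdsWithin] with x (hx : -c < x)
  have hxc0 : ((x + c : ℝ) : ℂ) ≠ 0 := by exact_mod_cast (by linarith : 0 < x + c).ne'
  have hw : ((x : ℂ) + v x * Complex.I).re < 0 ∨ ((x : ℂ) + v x * Complex.I).im ≠ 0 :=
    Or.inr (by simpa using (hvpos x hx).ne')
  rw [Function.comp_apply, ← Complex.ofReal_re ((P x - s) / (x + c))]
  congr 1
  push_cast at hxc0 ⊢
  rw [hP x, hs, Hfun_sub_Hfun_ofReal_neg hα hc hceq hw]
  field_simp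
  ring

end LeftEndpoint

theorem free_gamma_behavior_at_left_endpoint_general
    (α : ℝ) (hα : 0 < α) (c : ℝ) (hc : 0 < c)
    (hceq : (∫ t in Set.Ioi (0:ℝ), t * Real.exp (-t) / (c + t)^2) = 1/α)
    (v : ℝ → ℝ) (hv0 : ∀ x ≤ -c, v x = 0)
    (hvpos : ∀ x, -c < x → 0 < v x)
    (hveq : ∀ x, -c < x → Fint x (v x) = 1/α)
    (P : ℝ → ℝ)
    (hP : ∀ x : ℝ, ((P x : ℝ) : ℂ) = Hfun α ((x : ℂ) + (v x : ℝ) * Complex.I))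
    (s : ℝ) (hs : s = P (-c))
    (γ : ℝ)
    (hγ : (γ : ℂ) = 6 * iteratedDeriv 2 (Hfun α) ((-c : ℝ) : ℂ)
        / iteratedDeriv 3 (Hfun α) ((-c : ℝ) : ℂ)) :
    0 < γ ∧
    Filter.Tendsto (fun x => v x / (Real.sqrt γ * Real.sqrt (x + c)))
      (nhdsWithin (-c) (Set.Ioi (-c))) (nhds 1) ∧
    Filter.Tendsto (fun x => (P x - s) / (x + c))
      (nhdsWithin (-c) (Set.Ioi (-c)))
      (nhds (-(1/2) * γ * (iteratedDeriv 2 (Hfun α) ((-c : ℝ) : ℂ)).re)) ∧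
    0 < -(1/2) * γ * (iteratedDeriv 2 (Hfun α) ((-c : ℝ) : ℂ)).re := by
  have hI3 := texpMoment_pos hc 3
  have hI4 := texpMoment_pos hc 4
  have hγI : γ = 2 * texpMoment c 3 / texpMoment c 4 := by
    rw [iteratedDeriv_two_Hfun_ofReal_neg α hc, iteratedDeriv_three_Hfun_ofReal_neg α hc,
      ← Complex.ofReal_ofNat, ← Complex.ofReal_mul, ← Complex.ofReal_div] at hγ
    rw [Complex.ofReal_injective hγ]
    field_simp
  have hγpos : 0 < γ := by rw [hγI]; positivity
  have hrat : Tendsto (fun x => v x ^ 2 / (x + c)) (𝓝[>] (-c)) (𝓝 γ) :=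
    hγI ▸ tendsto_sq_div_nhdsGT hc hceq hvpos hveq
  have hs' : (s : ℂ) = Hfun α ((-c : ℝ) : ℂ) := by simp [hs, hP, hv0]
  have hH2 : (iteratedDeriv 2 (Hfun α) ((-c : ℝ) : ℂ)).re = -2 * α * texpMoment c 3 := by
    rw [iteratedDeriv_two_Hfun_ofReal_neg α hc, Complex.ofReal_re]
  refine ⟨hγpos, tendsto_div_sqrt_mul_sqrt hγpos ?_ ?_ hrat, ?_, ?_⟩
  · filter_upwards [self_mem_nhdsWithin] with x (hx : -c < x) using by linarith
  · filter_upwards [self_mem_nhdsWithin] with x (hx : -c < x) using hvpos x hx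
  · rw [hH2]
    convert tendsto_sub_div_nhdsGT hα.ne' hc hceq hvpos (tendsto_zero_of_Fint_eq hc hceq hvpos hveq)
      hrat hP hs' using 2
    ring
  · rw [hH2]
    linarith [mul_pos (mul_pos hα hγpos) hI3]

/-- with `γ_α = 6 H_α″(-c_α)/H_α‴(-c_α)` one has `γ_α > 0`,
`v_α(x) ∼ γ_α^{1/2}(x+c_α)^{1/2}` as `x ↓ -c_α`, and
`(P_α(x) − s_α)/(x + c_α) → −(1/2) γ_α H_α″(-c_α) > 0` as `x ↓ -c_α`. -/
theorem free_gamma_behavior_at_left_endpoint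
    (α : ℝ) (hα : 0 < α) (c : ℝ) (hc : 0 < c)
    (hceq : (∫ t in Set.Ioi (0:ℝ), t * Real.exp (-t) / (c + t)^2) = 1/α)
    (v : ℝ → ℝ) (hv0 : ∀ x ≤ -c, v x = 0)
    (hvpos : ∀ x, -c < x → 0 < v x)
    (hveq : ∀ x, -c < x → Fint x (v x) = 1/α)
    (hvuniq : ∀ x, -c < x → ∀ y, 0 < y → Fint x y = 1/α → y = v x)
    (P : ℝ → ℝ)
    (hP : ∀ x : ℝ, ((P x : ℝ) : ℂ) = Hfun α ((x : ℂ) + (v x : ℝ) * Complex.I))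
    (s : ℝ) (hs : s = P (-c))
    (γ : ℝ)
    (hγ : (γ : ℂ) = 6 * iteratedDeriv 2 (Hfun α) ((-c : ℝ) : ℂ)
        / iteratedDeriv 3 (Hfun α) ((-c : ℝ) : ℂ)) :
    0 < γ ∧
    Filter.Tendsto (fun x => v x / (Real.sqrt γ * Real.sqrt (x + c)))
      (nhdsWithin (-c) (Set.Ioi (-c))) (nhds 1) ∧
    Filter.Tendsto (fun x => (P x - s) / (x + c))
      (nhdsWithin (-c) (Set.Ioi (-c)))
      (nhds (-(1/2) * γ * (iteratedDeriv 2 (Hfun α) ((-c : ℝ) : ℂ)).re)) ∧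
    0 < -(1/2) * γ * (iteratedDeriv 2 (Hfun α) ((-c : ℝ) : ℂ)).re :=
  free_gamma_behavior_at_left_endpoint_general α hα c hc hceq v hv0 hvpos hveq P hP s hs γ hγ
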